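/- Let A, B, C, D partition X with sizes a, b, c, d. Define p_{AB} = Σ_{{U,V}} w(AB)_{U|V} · δ_{U|V}, where the sum is over the six unordered pairs of distinct sets from {A,B,C,D} and w(AB)_{A|B} = (a+b)cd(c+d), w(AB)_{A|C} = −bd(bc+ad), w(AB)_{A|D} = −bc(ac+bd), w(AB)_{B|C} = −ad(ac+bd), w(AB)_{B|D} = −ac(bc+ad), w(AB)_{C|D} = ab(a+b)(c+d). Then p_{AB} is orthogonal to each of δ_{A|B∪C∪D}, δ_{B|A∪C∪D}, δ_{C|A∪B∪D}, and δ_{D|A∪B∪C}. -/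

import Mathlib

/-!
For disjoint `U, V` and disjoint `U', V'`, the inner product `⟪δ_{U|V}, δ_{U'|V'}⟫` counts the
pairs `{u, v}` with `u ∈ U`, `v ∈ V` separated by `U' | V'`, i.e. it is
`|U ∩ U'| |V ∩ V'| + |U ∩ V'| |V ∩ U'|`. Against the pendant split of `A` only the terms
`A|B`, `A|C`, `A|D` of `p_{AB}` survive, contributing `ab`, `ac`, `ad` times their weights, and
the sum is `abcd ((a + b)(c + d) - (bc + ad) - (ac + bd)) = 0`; the same identity appears for
the other three pendant splits.
-/

open Finset
open scoped Classical

variable {X : Type*} [Fintype X] [DecidableEq X]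

/-- Split pseudometric: coordinate at pair s is 1 if s meets both U and V, else 0. -/
noncomputable def splitDelta (U V : Finset X) : EuclideanSpace ℝ (Sym2 X) :=
  WithLp.toLp 2 (fun s => if (∃ i ∈ s, i ∈ U) ∧ (∃ j ∈ s, j ∈ V) then 1 else 0)

variable {U V U' V' : Finset X}

lemma filter_splitDelta_support_eq_image (hUV : Disjoint U V) :
    univ.filter (fun s : Sym2 X => (∃ i ∈ s, i ∈ U) ∧ ∃ j ∈ s, j ∈ V)
      = (U ×ˢ V).image (fun p => s(p.1, p.2)) := by
  ext s
  induction s using Sym2.inductionOn with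
  | hf x y =>
    simp only [mem_filter, mem_univ, true_and, mem_image, mem_product, Prod.exists,
      Sym2.mem_iff, exists_eq_or_imp, exists_eq_left]
    constructor
    · rintro ⟨hx | hy, hx' | hy'⟩
      · exact absurd hx' (disjoint_left.mp hUV hx)
      · exact ⟨x, y, ⟨hx, hy'⟩, rfl⟩
      · exact ⟨y, x, ⟨hy, hx'⟩, Sym2.eq_swap⟩
      · exact absurd hy' (disjoint_left.mp hUV hy)
    · rintro ⟨u, v, ⟨hu, hv⟩, huv⟩
      rcases Sym2.eq_iff.mp huv with ⟨rfl, rfl⟩ | ⟨rfl, rfl⟩ <;> tauto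

lemma injOn_sym2_mk_product {α : Type*} {U V : Finset α} (hUV : Disjoint U V) :
    Set.InjOn (fun p : α × α => s(p.1, p.2)) (U ×ˢ V : Finset (α × α)) := by
  rintro ⟨u, v⟩ hp ⟨u', v'⟩ hq h
  simp only [coe_product, Set.mem_prod, mem_coe] at hp hq
  rcases Sym2.mk_eq_mk_iff.mp h with h | h
  · exact h
  · simp only [Prod.swap_prod_mk, Prod.mk.injEq] at h
    exact absurd hq.2 (disjoint_left.mp hUV (h.1 ▸ hp.1))

lemma inner_splitDelta_left (hUV : Disjoint U V) (g : EuclideanSpace ℝ (Sym2 X)) :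
    inner ℝ (splitDelta U V) g = ∑ u ∈ U, ∑ v ∈ V, g s(u, v) := by
  calc inner ℝ (splitDelta U V) g
      = ∑ s : Sym2 X, if (∃ i ∈ s, i ∈ U) ∧ ∃ j ∈ s, j ∈ V then g s else 0 := by
        simp only [PiLp.inner_apply, RCLike.inner_apply, conj_trivial, splitDelta,
          mul_ite, mul_one, mul_zero]
    _ = ∑ p ∈ U ×ˢ V, g s(p.1, p.2) := by
        rw [← sum_filter, filter_splitDelta_support_eq_image hUV,
          sum_image (injOn_sym2_mk_product hUV)]
    _ = ∑ u ∈ U, ∑ v ∈ V, g s(u, v) := sum_product _ _ _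

lemma splitDelta_apply_mk (hUV : Disjoint U V) (x y : X) :
    splitDelta U V s(x, y) = (if x ∈ U then 1 else 0) * (if y ∈ V then 1 else 0)
      + (if x ∈ V then 1 else 0) * (if y ∈ U then 1 else 0) := by
  have hU := disjoint_left.mp hUV
  simp only [splitDelta, WithLp.ofLp_toLp, Sym2.mem_iff, exists_eq_or_imp, exists_eq_left]
  by_cases hxU : x ∈ U <;> by_cases hxV : x ∈ V <;> by_cases hyU : y ∈ U <;>
    by_cases hyV : y ∈ V <;> simp_all

lemma sum_ite_mem_eq_card_inter {α : Type*} [DecidableEq α] (U U' : Finset α) :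
    ∑ u ∈ U, (if u ∈ U' then (1 : ℝ) else 0) = #(U ∩ U') := by
  rw [sum_boole, filter_mem_eq_inter]

lemma inner_splitDelta_splitDelta (hUV : Disjoint U V) (hUV' : Disjoint U' V') :
    inner ℝ (splitDelta U V) (splitDelta U' V')
      = #(U ∩ U') * #(V ∩ V') + #(U ∩ V') * #(V ∩ U') := by
  simp only [inner_splitDelta_left hUV, splitDelta_apply_mk hUV', sum_add_distrib,
    ← sum_mul_sum, sum_ite_mem_eq_card_inter]

theorem pAB_orthogonal_to_pendant_splits_general (A B C D : Finset X)
    (hAB : Disjoint A B) (hAC : Disjoint A C) (hAD : Disjoint A D)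
    (hBC : Disjoint B C) (hBD : Disjoint B D) (hCD : Disjoint C D) :
    let a : ℝ := A.card; let b : ℝ := B.card; let c : ℝ := C.card; let d : ℝ := D.card
    let pAB := (((a + b) * c * d * (c + d)) • splitDelta A B +
        (-(b * d * (b * c + a * d))) • splitDelta A C +
        (-(b * c * (a * c + b * d))) • splitDelta A D +
        (-(a * d * (a * c + b * d))) • splitDelta B C +
        (-(a * c * (b * c + a * d))) • splitDelta B D +
        (a * b * (a + b) * (c + d)) • splitDelta C D : EuclideanSpace ℝ (Sym2 X))
    (inner ℝ pAB (splitDelta A (B ∪ C ∪ D)) : ℝ) = 0 ∧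
    (inner ℝ pAB (splitDelta B (A ∪ C ∪ D)) : ℝ) = 0 ∧
    (inner ℝ pAB (splitDelta C (A ∪ B ∪ D)) : ℝ) = 0 ∧
    (inner ℝ pAB (splitDelta D (A ∪ B ∪ C)) : ℝ) = 0 := by
  intro a b c d pAB
  have inter_eq_empty {P Q : Finset X} (h : Disjoint P Q) : P ∩ Q = ∅ ∧ Q ∩ P = ∅ :=
    ⟨disjoint_iff_inter_eq_empty.mp h, disjoint_iff_inter_eq_empty.mp h.symm⟩
  simp only [pAB, inner_add_left, real_inner_smul_left, inner_splitDelta_splitDelta,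
    disjoint_union_right, and_self, hAB, hAC, hAD, hBC, hBD, hCD, hAB.symm, hAC.symm,
    hAD.symm, hBC.symm, hBD.symm, hCD.symm, inter_union_distrib_left, inter_self,
    inter_eq_empty hAB, inter_eq_empty hAC, inter_eq_empty hAD, inter_eq_empty hBC,
    inter_eq_empty hBD, inter_eq_empty hCD, union_empty, empty_union, card_empty, Nat.cast_zero]
  refine ⟨?_, ?_, ?_, ?_⟩ <;> ring

/-- The vector p_{AB} = Σ w(AB)_{U|V}·δ_{U|V} is orthogonal to each of the four split
pseudometrics δ_{A|B∪C∪D}, δ_{B|A∪C∪D}, δ_{C|A∪B∪D}, δ_{D|A∪B∪C}. -/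
theorem pAB_orthogonal_to_pendant_splits (A B C D : Finset X)
    (hA : A.Nonempty) (hB : B.Nonempty) (hC : C.Nonempty) (hD : D.Nonempty)
    (hAB : Disjoint A B) (hAC : Disjoint A C) (hAD : Disjoint A D)
    (hBC : Disjoint B C) (hBD : Disjoint B D) (hCD : Disjoint C D)
    (hcover : A ∪ B ∪ C ∪ D = Finset.univ) :
    let a : ℝ := A.card; let b : ℝ := B.card; let c : ℝ := C.card; let d : ℝ := D.card
    let pAB := (((a + b) * c * d * (c + d)) • splitDelta A B +
        (-(b * d * (b * c + a * d))) • splitDelta A C +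
        (-(b * c * (a * c + b * d))) • splitDelta A D +
        (-(a * d * (a * c + b * d))) • splitDelta B C +
        (-(a * c * (b * c + a * d))) • splitDelta B D +
        (a * b * (a + b) * (c + d)) • splitDelta C D : EuclideanSpace ℝ (Sym2 X))
    (inner ℝ pAB (splitDelta A (B ∪ C ∪ D)) : ℝ) = 0 ∧
    (inner ℝ pAB (splitDelta B (A ∪ C ∪ D)) : ℝ) = 0 ∧
    (inner ℝ pAB (splitDelta C (A ∪ B ∪ D)) : ℝ) = 0 ∧
    (inner ℝ pAB (splitDelta D (A ∪ B ∪ C)) : ℝ) = 0 :=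
  pAB_orthogonal_to_pendant_splits_general A B C D hAB hAC hAD hBC hBD hCD
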